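/- arXiv:1706.01686 — 5 statements merged into one kernel-verified Lean document; each statement's English description precedes it below -/
import Mathlib

section
/- Let s be a real polynomial of degree ≤ k and L > 0. Then there exists δ > 0 such that for all μ ∈ (L-δ, L), |s(μ)·μ + 1| ≥ (1 - μ/L)^(k+1). -/
open Polynomial

theorem stmt1 (k : ℕ) (s : Polynomial ℝ) (hs : s.natDegree ≤ k) (L : ℝ) (hL : 0 < L) :
    ∃ δ > 0, ∀ μ ∈ Set.Ioo (L - δ) L, |s.eval μ * μ + 1| ≥ (1 - μ / L) ^ (k + 1) := by
  set p : Polynomial ℝ := s * X + 1 with hp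
  have hpe : ∀ μ : ℝ, p.eval μ = s.eval μ * μ + 1 := by intro μ; simp [hp]
  have hp0 : p ≠ 0 := by
    intro h
    have := hpe 0
    rw [h] at this
    simp at this
  have hpdeg : p.natDegree ≤ k + 1 := by
    calc p.natDegree ≤ max (s * X).natDegree (1 : ℝ[X]).natDegree := natDegree_add_le _ _
    _ ≤ k + 1 := by
        simp only [natDegree_one, max_le_iff]
        constructor
        · calc (s * X).natDegree ≤ s.natDegree + X.natDegree := natDegree_mul_le
          _ ≤ k + 1 := by simp [natDegree_X]; omega
        · omega
  set m := p.rootMultiplicity L with hm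
  set q := p /ₘ (X - C L) ^ m with hq
  have hfac : ∀ μ : ℝ, p.eval μ = (μ - L) ^ m * q.eval μ := by
    intro μ
    conv_lhs => rw [← p.pow_mul_divByMonic_rootMultiplicity_eq L]
    simp [hq, hm]
  have hqL : q.eval L ≠ 0 := eval_divByMonic_pow_rootMultiplicity_ne_zero L hp0
  have hmle : m ≤ k + 1 := by
    have hd : (X - C L) ^ m ∣ p := p.pow_rootMultiplicity_dvd L
    have := natDegree_le_of_dvd hd hp0
    rw [natDegree_pow, natDegree_X_sub_C, mul_one] at this
    omega
  have key : ∀ μ : ℝ, (1 - μ / L) ^ (k+1) = (L - μ) ^ (k+1) / L ^ (k+1) := by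
    intro μ
    have h1 : 1 - μ / L = (L - μ) / L := by field_simp
    rw [h1, div_pow]
  by_cases hcase : m = k + 1
  · -- equality case: p = c (X - L)^(k+1)
    have hqdeg : q.natDegree = 0 := by
      rw [hq, natDegree_divByMonic _ ((monic_X_sub_C L).pow m)]
      rw [natDegree_pow, natDegree_X_sub_C, mul_one]
      omega
    obtain ⟨c, hc⟩ := natDegree_eq_zero.mp hqdeg
    have hc1 : (0 - L) ^ m * c = 1 := by
      have := hfac 0
      rw [hpe 0, ← hc, eval_C] at this
      simpa using this.symm
    have habs : |c| = 1 / L ^ (k + 1) := by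
      have : |(0 - L : ℝ) ^ m| * |c| = 1 := by rw [← abs_mul, hc1, abs_one]
      rw [zero_sub, abs_pow, abs_neg, abs_of_pos hL, hcase] at this
      field_simp at this ⊢
      linarith [this]
    refine ⟨L, hL, fun μ hμ => ?_⟩
    rw [← hpe μ, hfac μ, ← hc, eval_C, key μ]
    rw [abs_mul, abs_pow, habs, hcase]
    have h1 : |μ - L| = L - μ := by rw [abs_sub_comm]; exact abs_of_pos (by linarith [hμ.2])
    rw [h1]
    apply le_of_eq
    field_simp
  · -- m ≤ k
    have hmk : m ≤ k := by omega
    set ε := |q.eval L| / 2 with hε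
    have hεpos : 0 < ε := by positivity
    have hcont : ContinuousAt (fun x => q.eval x) L := (q.continuous).continuousAt
    rw [Metric.continuousAt_iff] at hcont
    obtain ⟨δ₁, hδ₁, hδ₁'⟩ := hcont ε hεpos
    set δ := min δ₁ (min 1 (min L (ε * L ^ (k + 1)))) with hδ
    have hδpos : 0 < δ := by
      apply lt_min hδ₁
      apply lt_min one_pos
      exact lt_min hL (by positivity)
    refine ⟨δ, hδpos, fun μ hμ => ?_⟩
    obtain ⟨hμ1, hμ2⟩ := hμ
    have hLμ : 0 < L - μ := by linarith
    have hLμδ : L - μ < δ := by linarith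
    have hqb : ε ≤ |q.eval μ| := by
      have hd : dist μ L < δ₁ := by
        rw [Real.dist_eq]
        rw [abs_sub_comm]
        rw [abs_of_pos hLμ]
        exact lt_of_lt_of_le hLμδ (min_le_left _ _)
      have := hδ₁' hd
      rw [Real.dist_eq] at this
      have h2 := abs_sub_abs_le_abs_sub (q.eval L) (q.eval μ)
      rw [abs_sub_comm] at this
      have : |q.eval L| - |q.eval μ| < ε := lt_of_le_of_lt h2 this
      rw [hε] at *
      linarith
    have hpow : (L - μ) ^ (k + 1 - m) ≤ ε * L ^ (k + 1) := by
      have h1 : L - μ ≤ 1 := le_trans hLμδ.le (le_trans (min_le_right _ _) (by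
        exact le_trans (min_le_left _ _) le_rfl))
      have h2 : (L - μ) ^ (k + 1 - m) ≤ L - μ :=
        pow_le_of_le_one hLμ.le h1 (by omega)
      have h3 : L - μ ≤ ε * L ^ (k + 1) := le_trans hLμδ.le (by
        calc δ ≤ min 1 (min L (ε * L ^ (k+1))) := min_le_right _ _
        _ ≤ min L (ε * L ^ (k+1)) := min_le_right _ _
        _ ≤ ε * L ^ (k+1) := min_le_right _ _)
      linarith
    rw [← hpe μ, hfac μ, key μ]
    rw [abs_mul, abs_pow]
    have h1 : |μ - L| = L - μ := by rw [abs_sub_comm]; exact abs_of_pos hLμ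
    rw [h1]
    rw [ge_iff_le, div_le_iff₀ (by positivity)]
    calc (L - μ) ^ (k + 1) = (L - μ) ^ m * (L - μ) ^ (k + 1 - m) := by
          rw [← pow_add]; congr 1; omega
    _ ≤ (L - μ) ^ m * (ε * L ^ (k + 1)) := by
          apply mul_le_mul_of_nonneg_left hpow (by positivity)
    _ = ((L - μ) ^ m * ε) * L ^ (k + 1) := by ring
    _ ≤ ((L - μ) ^ m * |q.eval μ|) * L ^ (k + 1) := by
          apply mul_le_mul_of_nonneg_right _ (by positivity)
          exact mul_le_mul_of_nonneg_left hqb (by positivity)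
end

section
/- Let s be a real polynomial of degree ≤ k and L > 0. If for every δ > 0 there exists μ ∈ (L-δ, L) with |s(μ)·μ + 1| < (1 - μ/L)^(k+1), then the polynomial q(μ) := s(L(1-μ))·L(1-μ) + 1 equals μ^(k+1) identically. -/
/-!
Substituting `μ = L (1 - ν)` turns the hypothesis into `|q ν| < ν ^ (k + 1)` for `ν` arbitrarily
close to `0` from the right. A polynomial that is `O(ν ^ n)` along such a sequence is divisible by
`X ^ n`, so `q = c X ^ (k + 1)` by the degree bound, and `q 1 = 1` forces `c = 1`.
-/

open Polynomial Filter Topology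

namespace Polynomial

theorem eval_zero_eq_zero_of_frequently_abs_eval_le {p : ℝ[X]} {C : ℝ} {n : ℕ}
    (h : ∃ᶠ x in 𝓝[>] 0, |p.eval x| ≤ C * x ^ (n + 1)) : p.eval 0 = 0 := by
  have hlim : Tendsto (fun x => |p.eval x| - C * x ^ (n + 1)) (𝓝[>] 0) (𝓝 |p.eval 0|) := by
    have hcont : Continuous fun x => |p.eval x| - C * x ^ (n + 1) := by fun_prop
    have := hcont.tendsto 0
    simpa using this.mono_left nhdsWithin_le_nhds
  have : |p.eval 0| ≤ 0 := le_of_tendsto_of_frequently hlim (h.mono fun x hx => by linarith)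
  exact abs_nonpos_iff.mp this

theorem X_pow_dvd_of_frequently_abs_eval_le {p : ℝ[X]} {C : ℝ} {n : ℕ}
    (h : ∃ᶠ x in 𝓝[>] 0, |p.eval x| ≤ C * x ^ n) : X ^ n ∣ p := by
  induction n generalizing p with
  | zero => exact pow_zero (X : ℝ[X]) ▸ one_dvd p
  | succ n ih =>
    obtain ⟨r, rfl⟩ : X ∣ p := X_dvd_iff.mpr <| by
      rw [coeff_zero_eq_eval_zero]; exact eval_zero_eq_zero_of_frequently_abs_eval_le h
    have hr : ∃ᶠ x in 𝓝[>] 0, |r.eval x| ≤ C * x ^ n := by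
      refine (h.and_eventually self_mem_nhdsWithin).mono fun x ⟨hx, (hpos : 0 < x)⟩ => ?_
      rw [eval_mul, eval_X, abs_mul, abs_of_pos hpos, pow_succ', mul_left_comm] at hx
      exact le_of_mul_le_mul_left hx hpos
    rw [pow_succ']
    exact mul_dvd_mul_left X (ih hr)

theorem eq_C_coeff_mul_X_pow_of_X_pow_dvd {R : Type*} [Semiring R] {p : R[X]} {n : ℕ}
    (hdvd : X ^ n ∣ p) (hdeg : p.natDegree ≤ n) : p = C (p.coeff n) * X ^ n := by
  ext d
  rw [coeff_C_mul_X_pow]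
  rcases lt_trichotomy d n with hd | rfl | hd
  · simp [X_pow_dvd_iff.mp hdvd d hd, hd.ne]
  · simp
  · simp [coeff_eq_zero_of_natDegree_lt (hdeg.trans_lt hd), hd.ne']

end Polynomial

theorem stmt2 (k : ℕ) (s : Polynomial ℝ) (hs : s.natDegree ≤ k) (L : ℝ) (hL : 0 < L)
    (h : ∀ δ > 0, ∃ μ ∈ Set.Ioo (L - δ) L, |s.eval μ * μ + 1| < (1 - μ / L) ^ (k + 1)) :
    ∀ μ : ℝ, s.eval (L * (1 - μ)) * (L * (1 - μ)) + 1 = μ ^ (k + 1) := by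
  set g : ℝ[X] := C L * (1 - X)
  set q : ℝ[X] := s.comp g * g + 1
  have hq_eval (μ : ℝ) : q.eval μ = s.eval (L * (1 - μ)) * (L * (1 - μ)) + 1 := by
    simp [q, g, eval_comp]
  have hq_deg : q.natDegree ≤ k + 1 := by
    have hg : g.natDegree ≤ 1 := by simp only [g]; compute_degree
    have hsg : (s.comp g).natDegree ≤ k :=
      natDegree_comp_le.trans (by simpa using Nat.mul_le_mul hs hg)
    exact (natDegree_add_le _ _).trans (max_le (natDegree_mul_le.trans (by omega)) (by simp))
  have hq_small : ∃ᶠ ν in 𝓝[>] 0, |q.eval ν| ≤ 1 * ν ^ (k + 1) := by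
    rw [(nhdsGT_basis 0).frequently_iff]
    intro δ hδ
    obtain ⟨μ, ⟨hμl, hμu⟩, hμ⟩ := h (L * δ) (by positivity)
    refine ⟨1 - μ / L, ⟨?_, ?_⟩, ?_⟩
    · have : μ / L < 1 := (div_lt_one hL).mpr hμu
      linarith
    · have : 1 - δ < μ / L := by rw [lt_div_iff₀ hL]; linarith
      linarith
    · have : L * (1 - (1 - μ / L)) = μ := by field_simp; ring
      rw [hq_eval, this, one_mul]
      exact hμ.le
  have hq := eq_C_coeff_mul_X_pow_of_X_pow_dvd (X_pow_dvd_of_frequently_abs_eval_le hq_small) hq_deg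
  have hc : q.coeff (k + 1) = 1 := by
    simpa [hq_eval] using (congrArg (eval 1) hq).symm
  intro μ
  rw [← hq_eval, hq, hc]
  simp
end

section
/- Let f^±(w) = M‖w ± e₁‖ + (λ/2)‖w‖² restricted to the unit ball, and F_σ = (1/n)[((n-σ)/2)f^+ + ((n+σ)/2)f^-]. If M/(λn) ≤ 1, then the minimizer of F_σ over the unit ball is (σ·M/(λn))e₁ and 2(F_1(0) - min F_1) = M²/(λn²). -/
set_option maxHeartbeats 1000000

open scoped RealInnerProductSpace

theorem stmt9 (d n : ℕ) (hd : 0 < d) (hn : Odd n) (hn1 : 0 < n) (M lam : ℝ)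
    (hM : 0 < M) (hlam : 0 < lam) (hMlam : M/(lam*n) ≤ 1)
    (e1 : EuclideanSpace ℝ (Fin d)) (he1 : e1 = EuclideanSpace.single ⟨0, hd⟩ 1)
    (fp fm : EuclideanSpace ℝ (Fin d) → ℝ)
    (hfp : ∀ w, fp w = M * ‖w + e1‖ + (lam/2) * ‖w‖^2)
    (hfm : ∀ w, fm w = M * ‖w - e1‖ + (lam/2) * ‖w‖^2)
    (F : ℝ → EuclideanSpace ℝ (Fin d) → ℝ)
    (hF : ∀ σ w, F σ w = (1/(n:ℝ)) * (((n - σ)/2) * fp w + ((n + σ)/2) * fm w)) :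
    (∀ σ : ℝ, (σ = 1 ∨ σ = -1) →
      ∀ w ∈ Metric.closedBall (0 : EuclideanSpace ℝ (Fin d)) 1,
        F σ ((σ*M/(lam*n)) • e1) ≤ F σ w) ∧
    2 * (F 1 0 - F 1 ((M/(lam*n)) • e1)) = M^2/(lam*(n:ℝ)^2) := by
  have hn0 : (1:ℝ) ≤ (n:ℝ) := by exact_mod_cast hn1
  have hnpos : (0:ℝ) < (n:ℝ) := by linarith
  have hnne : (n:ℝ) ≠ 0 := ne_of_gt hnpos
  have hlamne : lam ≠ 0 := ne_of_gt hlam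
  have hne1 : ‖e1‖ = 1 := by rw [he1, EuclideanSpace.norm_single]; norm_num
  have hlamn : (0:ℝ) < lam * (n:ℝ) := by positivity
  have hMle : M ≤ lam * (n:ℝ) := by
    rw [div_le_one hlamn] at hMlam; exact hMlam
  -- value at the candidate minimizer
  have val : ∀ σ : ℝ, (σ = 1 ∨ σ = -1) →
      F σ ((σ*M/(lam*n)) • e1) = M - M^2/(2*lam*(n:ℝ)^2) := by
    intro σ hσ
    have h0 : (0:ℝ) ≤ M/(lam*(n:ℝ)) := by positivity
    have hb : -1 ≤ σ*M/(lam*(n:ℝ)) ∧ σ*M/(lam*(n:ℝ)) ≤ 1 := by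
      rcases hσ with h|h <;> rw [h]
      · rw [one_mul]
        exact ⟨by linarith, hMlam⟩
      · have heq : -1*M/(lam*(n:ℝ)) = -(M/(lam*(n:ℝ))) := by ring
        rw [heq]
        exact ⟨by linarith, by linarith⟩
    obtain ⟨hb1, hb2⟩ := hb
    set t := σ*M/(lam*(n:ℝ)) with ht
    have e1' : t • e1 + e1 = (t+1) • e1 := by module
    have e2' : t • e1 - e1 = (t-1) • e1 := by module
    rw [hF, hfp, hfm, e1', e2']
    simp only [norm_smul, hne1, mul_one, Real.norm_eq_abs, sq_abs]
    rw [abs_of_nonneg (by linarith : (0:ℝ) ≤ t+1),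
        abs_of_nonpos (by linarith : t-1 ≤ (0:ℝ))]
    rw [ht]
    rcases hσ with h|h <;> rw [h] <;> field_simp <;> ring
  -- global lower bound
  have lb : ∀ σ : ℝ, (σ = 1 ∨ σ = -1) → ∀ w : EuclideanSpace ℝ (Fin d),
      M - M^2/(2*lam*(n:ℝ)^2) ≤ F σ w := by
    intro σ hσ w
    have hσ1 : -1 ≤ σ ∧ σ ≤ 1 := by rcases hσ with h|h <;> rw [h] <;> norm_num
    have hσ2 : σ^2 = 1 := by rcases hσ with h|h <;> rw [h] <;> norm_num
    have hA : ⟪w, e1⟫ + 1 ≤ ‖w + e1‖ := by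
      have h := real_inner_le_norm (w + e1) e1
      simp only [inner_add_left, real_inner_self_eq_norm_sq, hne1, one_pow, mul_one] at h
      linarith
    have hB : 1 - ⟪w, e1⟫ ≤ ‖w - e1‖ := by
      have h := real_inner_le_norm (e1 - w) e1
      simp only [inner_sub_left, real_inner_self_eq_norm_sq, hne1, one_pow, mul_one] at h
      rw [norm_sub_rev] at h
      linarith
    have hx2 : ⟪w, e1⟫^2 ≤ ‖w‖^2 := by
      have h := abs_real_inner_le_norm w e1
      rw [hne1, mul_one] at h
      nlinarith [abs_nonneg ⟪w, e1⟫, sq_abs ⟪w, e1⟫]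
    rw [hF, hfp, hfm]
    set A := ‖w + e1‖ with hAdef
    set B := ‖w - e1‖ with hBdef
    set r := ‖w‖ with hrdef
    set x := ⟪w, e1⟫ with hxdef
    clear_value A B r x
    have hc1 : (0:ℝ) ≤ (n:ℝ) - σ := by linarith [hσ1.2]
    have hc2 : (0:ℝ) ≤ (n:ℝ) + σ := by linarith [hσ1.1]
    have T1 : 0 ≤ lam*(n:ℝ)*((n:ℝ)-σ) * (M*A - M*(x+1)) :=
      mul_nonneg (mul_nonneg hlamn.le hc1)
        (sub_nonneg.mpr (mul_le_mul_of_nonneg_left hA hM.le))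
    have T2 : 0 ≤ lam*(n:ℝ)*((n:ℝ)+σ) * (M*B - M*(1-x)) :=
      mul_nonneg (mul_nonneg hlamn.le hc2)
        (sub_nonneg.mpr (mul_le_mul_of_nonneg_left hB hM.le))
    have T3 : 0 ≤ lam^2*(n:ℝ)^2*(r^2 - x^2) :=
      mul_nonneg (by positivity) (sub_nonneg.mpr hx2)
    have T4 : 0 ≤ (lam*(n:ℝ)*x - σ*M)^2 := sq_nonneg _
    have T5 : σ^2*M^2 = M^2 := by rw [hσ2]; ring
    have hnum : 0 ≤ 2*lam*(n:ℝ)*((((n:ℝ) - σ)/2) * (M*A + (lam/2)*r^2)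
        + (((n:ℝ) + σ)/2) * (M*B + (lam/2)*r^2)) - (2*lam*(n:ℝ)*(n:ℝ)*M - M^2) := by
      nlinarith [T1, T2, T3, T4, T5]
    have expand : (1/(n:ℝ)) * ((((n:ℝ) - σ)/2) * (M*A + (lam/2)*r^2)
        + (((n:ℝ) + σ)/2) * (M*B + (lam/2)*r^2)) - (M - M^2/(2*lam*(n:ℝ)^2))
        = (2*lam*(n:ℝ)*((((n:ℝ) - σ)/2) * (M*A + (lam/2)*r^2)
        + (((n:ℝ) + σ)/2) * (M*B + (lam/2)*r^2)) - (2*lam*(n:ℝ)*(n:ℝ)*M - M^2))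
          / (2*lam*(n:ℝ)*(n:ℝ)) := by
      field_simp
    have hdiv : 0 ≤ (2*lam*(n:ℝ)*((((n:ℝ) - σ)/2) * (M*A + (lam/2)*r^2)
        + (((n:ℝ) + σ)/2) * (M*B + (lam/2)*r^2)) - (2*lam*(n:ℝ)*(n:ℝ)*M - M^2))
          / (2*lam*(n:ℝ)*(n:ℝ)) := div_nonneg hnum (by positivity)
    linarith [expand, hdiv]
  constructor
  · intro σ hσ w hw
    rw [val σ hσ]
    exact lb σ hσ w
  · have h0 : F 1 0 = M := by
      rw [hF, hfp, hfm]
      simp only [zero_add, zero_sub, norm_neg, hne1, norm_zero]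
      field_simp
      ring
    have h1 : F 1 ((M/(lam*n)) • e1) = M - M^2/(2*lam*(n:ℝ)^2) := by
      have h := val 1 (Or.inl rfl)
      rwa [one_mul] at h
    rw [h0, h1]
    field_simp
    ring
end

section
/- Let f^±(w) = M‖w ± e₁‖ + (λ/2)‖w‖² restricted to the unit ball, and F_σ = (1/n)[((n-σ)/2)f^+ + ((n+σ)/2)f^-]. If M/(λn) > 1, then the minimizer of F_σ over the unit ball is σ·e₁ and 2(F_1(0) - min F_1) = 2M/n - λ. -/
open RealInnerProductSpace in
lemma key10 {d : ℕ} (nn M lam : ℝ) (hn : 1 ≤ nn) (hM : 0 < M) (hlam : 0 < lam)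
    (hMn : lam * nn ≤ M) (e w : EuclideanSpace ℝ (Fin d)) (he : ‖e‖ = 1) (hw : ‖w‖ ≤ 1) :
    (nn-1)*(M*2 + lam/2*1) + (nn+1)*(M*0 + lam/2*1) ≤
    (nn-1)*(M*‖w+e‖ + lam/2*‖w‖^2) + (nn+1)*(M*‖w-e‖ + lam/2*‖w‖^2) := by
  set t : ℝ := ⟪w, e⟫ with hts
  have habs : |t| ≤ ‖w‖ := by
    have := abs_real_inner_le_norm w e
    simpa [he] using this
  have ht : t ≤ ‖w‖ := (le_abs_self t).trans habs
  have ht2 : t^2 ≤ ‖w‖^2 := by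
    have := neg_abs_le t
    nlinarith [norm_nonneg w]
  have hsub : ‖w - e‖^2 = ‖w‖^2 - 2*t + 1 := by
    rw [norm_sub_sq_real, he]; ring
  have h1 : 1 - t ≤ ‖w - e‖ := by
    nlinarith [norm_nonneg (w - e)]
  have htri : 2 ≤ ‖w+e‖ + ‖w-e‖ := by
    have h := norm_sub_le (w+e) (w-e)
    have he2 : w + e - (w - e) = (2:ℝ) • e := by module
    rw [he2, norm_smul, he] at h
    simp at h; linarith
  have h3 : 0 ≤ M * ((nn-1)*(‖w+e‖+‖w-e‖-2)) :=
    mul_nonneg hM.le (mul_nonneg (by linarith) (by linarith))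
  have h4 : 0 ≤ (M - lam*nn)*(1 - t) := mul_nonneg (by linarith) (by linarith)
  have h5 : 0 ≤ lam*nn*(‖w‖^2+1-2*t) := by
    apply mul_nonneg (by positivity)
    nlinarith [sq_nonneg (‖w‖-1)]
  have h6 : 0 ≤ M * (‖w-e‖ - (1-t)) := mul_nonneg hM.le (by linarith)
  nlinarith [h3, h4, h5, h6]

theorem stmt10 (d n : ℕ) (hd : 0 < d) (hn : Odd n) (hn1 : 0 < n) (M lam : ℝ)
    (hM : 0 < M) (hlam : 0 < lam) (hMlam : 1 < M/(lam*n))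
    (e1 : EuclideanSpace ℝ (Fin d)) (he1 : e1 = EuclideanSpace.single ⟨0, hd⟩ 1)
    (fp fm : EuclideanSpace ℝ (Fin d) → ℝ)
    (hfp : ∀ w, fp w = M * ‖w + e1‖ + (lam/2) * ‖w‖^2)
    (hfm : ∀ w, fm w = M * ‖w - e1‖ + (lam/2) * ‖w‖^2)
    (F : ℝ → EuclideanSpace ℝ (Fin d) → ℝ)
    (hF : ∀ σ w, F σ w = (1/(n:ℝ)) * (((n - σ)/2) * fp w + ((n + σ)/2) * fm w)) :
    (∀ σ : ℝ, (σ = 1 ∨ σ = -1) →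
      ∀ w ∈ Metric.closedBall (0 : EuclideanSpace ℝ (Fin d)) 1,
        F σ (σ • e1) ≤ F σ w) ∧
    2 * (F 1 0 - F 1 e1) = 2*M/(n:ℝ) - lam := by
  have hne1 : ‖e1‖ = 1 := by rw [he1, EuclideanSpace.norm_single]; norm_num
  have hnn : (1:ℝ) ≤ (n:ℝ) := by exact_mod_cast hn1
  have hn0 : (0:ℝ) < (n:ℝ) := by linarith
  have hMn : lam * (n:ℝ) ≤ M := by
    rw [one_lt_div (by positivity)] at hMlam
    linarith
  have hee : ‖e1 + e1‖ = 2 := by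
    have h : e1 + e1 = (2:ℝ) • e1 := by module
    rw [h, norm_smul, hne1]; norm_num
  constructor
  · rintro σ (rfl | rfl) w hw
    · rw [mem_closedBall_zero_iff] at hw
      have hkey := key10 (n:ℝ) M lam hnn hM hlam hMn e1 w hne1 hw
      rw [hF, hF, hfp, hfp, hfm, hfm]
      apply mul_le_mul_of_nonneg_left _ (by positivity : (0:ℝ) ≤ 1/(n:ℝ))
      simp only [one_smul, hee, hne1, sub_self, norm_zero]
      norm_num
      linarith [hkey]
    · rw [mem_closedBall_zero_iff] at hw
      have hkey := key10 (n:ℝ) M lam hnn hM hlam hMn (-e1) w (by rwa [norm_neg]) hw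
      rw [hF, hF, hfp, hfp, hfm, hfm]
      apply mul_le_mul_of_nonneg_left _ (by positivity : (0:ℝ) ≤ 1/(n:ℝ))
      have h1 : (-1:ℝ) • e1 + e1 = 0 := by module
      have h2 : (-1:ℝ) • e1 - e1 = -(e1 + e1) := by module
      have h3 : ‖(-1:ℝ) • e1‖ = 1 := by rw [norm_smul, hne1]; norm_num
      have h4 : w + e1 = w - (-e1) := by module
      have h5 : w - e1 = w + (-e1) := by module
      rw [h1, h2, h3, h4, h5, norm_zero, norm_neg, hee]
      norm_num at hkey ⊢
      linarith [hkey]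
  · rw [hF, hF, hfp, hfp, hfm, hfm]
    simp only [zero_add, zero_sub, norm_neg, hne1, norm_zero, hee, sub_self]
    field_simp
    ring
end

section
/- Suppose an algorithm run for k iterations on any L-smooth convex function f guarantees f(w^(k)) - f* ≤ C‖w^(0) - w*‖²/k^α with C, α > 0, and is restarted every ⌈(4C/μ)^(1/α)⌉ iterations on a μ-strongly convex f (each restart initialized at the previous output). Then after t restart epochs, f(w̄^(t)) - f* ≤ (1/2)^t (f(w̄^(0)) - f*), so ε-accuracy requires at most ⌈(4C/μ)^(1/α)⌉·⌈log₂((f(w̄^(0))-f*)/ε)⌉ total iterations. -/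
/-!
One epoch of `K` iterations from `w` gives the gap `C‖w - w*‖² / K^α`, and strong convexity
bounds `‖w - w*‖²` by `(2/μ)` times the gap at `w`; the choice `K^α ≥ 4C/μ` makes the product at
most half the gap at `w`. Iterating halves the gap every epoch, and `⌈log₂ (gap₀/ε)⌉` halvings
bring it below `ε`.
-/

open Real

theorem le_pow_mul_of_le_mul {e : ℕ → ℝ} {c : ℝ} (hc : 0 ≤ c)
    (h : ∀ t, e (t + 1) ≤ c * e t) (t : ℕ) : e t ≤ c ^ t * e 0 := by
  induction t with
  | zero => simp
  | succ n ih =>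
    calc e (n + 1) ≤ c * e n := h n
      _ ≤ c * (c ^ n * e 0) := by gcongr
      _ = c ^ (n + 1) * e 0 := by ring

theorem inv_pow_ceil_logb_mul_le {b D ε : ℝ} (hb : 1 < b) (hD : 0 ≤ D) (hε : 0 < ε) :
    (b⁻¹) ^ ⌈logb b (D / ε)⌉₊ * D ≤ ε := by
  set T := ⌈logb b (D / ε)⌉₊
  have hbT : 0 < b ^ T := by positivity
  rw [inv_pow, inv_mul_le_iff₀ hbT, ← div_le_iff₀ hε]
  rcases hD.eq_or_lt with rfl | hDpos
  · simpa using hbT.le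
  calc D / ε = b ^ logb b (D / ε) := (rpow_logb (by linarith) hb.ne' (by positivity)).symm
    _ ≤ b ^ (T : ℝ) := rpow_le_rpow_of_exponent_le hb.le (Nat.le_ceil _)
    _ = b ^ T := rpow_natCast b T

theorem le_ceil_rpow_one_div_rpow {a α : ℝ} (ha : 0 ≤ a) (hα : 0 < α) :
    a ≤ (⌈a ^ (1 / α)⌉₊ : ℝ) ^ α :=
  calc a = (a ^ (1 / α)) ^ α := by rw [one_div, rpow_inv_rpow ha hα.ne']
    _ ≤ (⌈a ^ (1 / α)⌉₊ : ℝ) ^ α := by gcongr; exact Nat.le_ceil _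

theorem restart_gap_le_half {E : Type*} [SeminormedAddCommGroup E] {f : E → ℝ} {wstar w w' : E}
    {μ C Kα : ℝ} (hμ : 0 < μ) (hC : 0 < C) (hKα : 4 * C / μ ≤ Kα)
    (hmin : f wstar ≤ f w) (hsc : ‖w - wstar‖ ^ 2 ≤ (2 / μ) * (f w - f wstar))
    (hA : f w' - f wstar ≤ C * ‖w - wstar‖ ^ 2 / Kα) :
    f w' - f wstar ≤ 1 / 2 * (f w - f wstar) := by
  have hgap : 0 ≤ f w - f wstar := sub_nonneg.mpr hmin
  calc f w' - f wstar ≤ C * ‖w - wstar‖ ^ 2 / Kα := hA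
    _ ≤ C * ((2 / μ) * (f w - f wstar)) / (4 * C / μ) := by gcongr
    _ = 1 / 2 * (f w - f wstar) := by field_simp; ring

theorem stmt19_general (d : ℕ) (f : EuclideanSpace ℝ (Fin d) → ℝ)
    (wstar : EuclideanSpace ℝ (Fin d)) (μ C α : ℝ)
    (hμ : 0 < μ) (hC : 0 < C) (hα : 0 < α)
    (hmin : ∀ w, f wstar ≤ f w)
    (hsc : ∀ w, ‖w - wstar‖^2 ≤ (2/μ) * (f w - f wstar))
    (A : EuclideanSpace ℝ (Fin d) → ℕ → EuclideanSpace ℝ (Fin d))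
    (hA : ∀ w0 k, 1 ≤ k → f (A w0 k) - f wstar ≤ C * ‖w0 - wstar‖^2 / (k:ℝ)^α)
    (K : ℕ) (hK : K = ⌈(4*C/μ)^(1/α)⌉₊)
    (wbar : ℕ → EuclideanSpace ℝ (Fin d))
    (hwbar : ∀ t, wbar (t+1) = A (wbar t) K) :
    (∀ t, f (wbar t) - f wstar ≤ (1/2)^t * (f (wbar 0) - f wstar)) ∧
    (∀ ε > 0, f (wbar ⌈Real.logb 2 ((f (wbar 0) - f wstar)/ε)⌉₊) - f wstar ≤ ε) := by
  have hK1 : 1 ≤ K := hK ▸ Nat.ceil_pos.mpr (by positivity)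
  have hKα : 4 * C / μ ≤ (K : ℝ) ^ α := hK ▸ le_ceil_rpow_one_div_rpow (by positivity) hα
  have hhalf : ∀ t, f (wbar (t + 1)) - f wstar ≤ 1 / 2 * (f (wbar t) - f wstar) := fun t =>
    hwbar t ▸ restart_gap_le_half hμ hC hKα (hmin _) (hsc _) (hA _ _ hK1)
  have hgeom := le_pow_mul_of_le_mul (e := fun t => f (wbar t) - f wstar) (by norm_num) hhalf
  refine ⟨hgeom, fun ε hε => (hgeom _).trans ?_⟩
  simpa only [one_div] using
    inv_pow_ceil_logb_mul_le one_lt_two (sub_nonneg.mpr (hmin (wbar 0))) hε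

theorem stmt19 (d : ℕ) (f : EuclideanSpace ℝ (Fin d) → ℝ)
    (wstar : EuclideanSpace ℝ (Fin d)) (μ L C α : ℝ)
    (hμ : 0 < μ) (hL : 0 < L) (hC : 0 < C) (hα : 0 < α)
    (hmin : ∀ w, f wstar ≤ f w)
    (hsc : ∀ w, ‖w - wstar‖^2 ≤ (2/μ) * (f w - f wstar))
    (hsmooth : ∀ w v, f w ≤ f v + (inner ℝ (gradient f v) (w - v) : ℝ) + (L/2) * ‖w - v‖^2)
    (A : EuclideanSpace ℝ (Fin d) → ℕ → EuclideanSpace ℝ (Fin d))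
    (hA : ∀ w0 k, 1 ≤ k → f (A w0 k) - f wstar ≤ C * ‖w0 - wstar‖^2 / (k:ℝ)^α)
    (K : ℕ) (hK : K = ⌈(4*C/μ)^(1/α)⌉₊)
    (wbar : ℕ → EuclideanSpace ℝ (Fin d))
    (hwbar : ∀ t, wbar (t+1) = A (wbar t) K) :
    (∀ t, f (wbar t) - f wstar ≤ (1/2)^t * (f (wbar 0) - f wstar)) ∧
    (∀ ε > 0, f (wbar ⌈Real.logb 2 ((f (wbar 0) - f wstar)/ε)⌉₊) - f wstar ≤ ε) :=
  stmt19_general d f wstar μ C α hμ hC hα hmin hsc A hA K hK wbar hwbar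
end
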